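/- (Céa's Lemma) Let V be a real Hilbert space, a : V × V → ℝ a continuous (constant γ) and coercive (constant α > 0) bilinear form, f ∈ V' continuous linear. Let V_h ⊆ V be a closed subspace, u ∈ V satisfy a(u,v) = f(v) for all v ∈ V, and u_h ∈ V_h satisfy a(u_h, v_h) = f(v_h) for all v_h ∈ V_h. Then ‖u − u_h‖ ≤ (γ/α) ‖u − v_h‖ for every v_h ∈ V_h (hence ‖u − u_h‖ ≤ (γ/α) inf_{v_h ∈ V_h} ‖u − v_h‖). -/
import Mathlib


/-- Céa's Lemma. -/
theorem stmt_1 {V : Type*} [NormedAddCommGroup V] [InnerProductSpace ℝ V] [CompleteSpace V]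
    (a : V →ₗ[ℝ] V →ₗ[ℝ] ℝ) (γ α : ℝ) (hα : 0 < α)
    (hcont : ∀ w v : V, |a w v| ≤ γ * ‖w‖ * ‖v‖)
    (hcoer : ∀ w : V, α * ‖w‖ ^ 2 ≤ a w w)
    (f : V →L[ℝ] ℝ)
    (Vh : Submodule ℝ V) (hVh : IsClosed (Vh : Set V))
    (u : V) (hu : ∀ v : V, a u v = f v)
    (uh : V) (huh_mem : uh ∈ Vh) (huh : ∀ vh ∈ Vh, a uh vh = f vh) :
    ∀ vh ∈ Vh, ‖u - uh‖ ≤ (γ / α) * ‖u - vh‖ := by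
  intro vh hvh
  -- Galerkin orthogonality
  have horth : ∀ wh ∈ Vh, a (u - uh) wh = 0 := by
    intro wh hwh
    have h1 := hu wh
    have h2 := huh wh hwh
    simp [map_sub, h1, h2]
  by_cases hzero : u - vh = 0
  · -- then vh = u ∈ Vh, so u - uh = 0 by coercivity
    have huVh : u ∈ Vh := by
      have : u = vh := by rwa [sub_eq_zero] at hzero
      rw [this]; exact hvh
    have h0 : a (u - uh) (u - uh) = 0 := by
      have := horth (u - uh) (Submodule.sub_mem Vh huVh huh_mem)
      exact this
    have h1 : α * ‖u - uh‖ ^ 2 ≤ 0 := h0 ▸ hcoer (u - uh)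
    have h2 : ‖u - uh‖ = 0 := by
      by_contra h
      have hp : 0 < ‖u - uh‖ := (norm_nonneg _).lt_of_ne (Ne.symm h)
      have : 0 < α * ‖u - uh‖ ^ 2 := mul_pos hα (pow_pos hp 2)
      linarith
    rw [h2, hzero, norm_zero]
    simp
  · have hnv : 0 < ‖u - vh‖ := norm_pos_iff.mpr hzero
    have hγ : α ≤ γ := by
      have h1 := hcoer (u - vh)
      have h2 := hcont (u - vh) (u - vh)
      have h3 : a (u - vh) (u - vh) ≤ γ * ‖u - vh‖ * ‖u - vh‖ := le_trans (le_abs_self _) h2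
      have hsq : ‖u - vh‖ ^ 2 = ‖u - vh‖ * ‖u - vh‖ := sq ‖u - vh‖
      have h5 : α * (‖u - vh‖ * ‖u - vh‖) ≤ γ * (‖u - vh‖ * ‖u - vh‖) := by
        rw [← hsq]; rw [mul_assoc] at h3; linarith
      exact le_of_mul_le_mul_right h5 (mul_pos hnv hnv)
    by_cases he : u - uh = 0
    · rw [he, norm_zero]
      have hγpos : 0 < γ := lt_of_lt_of_le hα hγ
      positivity
    · have hne : 0 < ‖u - uh‖ := norm_pos_iff.mpr he
      -- key estimate
      have hkey : α * ‖u - uh‖ ^ 2 ≤ γ * ‖u - uh‖ * ‖u - vh‖ := by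
        have h1 := hcoer (u - uh)
        have h2 : a (u - uh) (u - uh) = a (u - uh) (u - vh) := by
          have h3 : a (u - uh) (vh - uh) = 0 :=
            horth (vh - uh) (Submodule.sub_mem Vh hvh huh_mem)
          have : a (u - uh) (u - uh) = a (u - uh) (u - vh) + a (u - uh) (vh - uh) := by
            rw [← map_add]
            congr 1
            abel
          rw [this, h3, add_zero]
        have h4 : a (u - uh) (u - vh) ≤ γ * ‖u - uh‖ * ‖u - vh‖ :=
          le_trans (le_abs_self _) (hcont _ _)
        linarith [h1, h2 ▸ h1]
      have : α * ‖u - uh‖ ≤ γ * ‖u - vh‖ := by nlinarith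
      rw [div_mul_eq_mul_div, le_div_iff₀ hα]
      nlinarith
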